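/- arXiv:1401.6043 — 4 statements merged into one kernel-verified Lean document; each statement's English description precedes it below -/
import Mathlib

section
/- Let $p, d, K > 0$ and let $a:\overline\Omega\to\mathbb{R}$ be continuous with $1/2 < a(x) < 1$ for all $x$, where $\Omega\subset\mathbb{R}$ is open and bounded. Let $(u_1,u_2)$ be a nonnegative classical solution of the system $\partial_t u_1(t,x) = (\tfrac{2a(x)}{1+K\rho_2(t)} - 1)p\,u_1(t,x)$, $\partial_t u_2(t,x) = 2(1-\tfrac{a(x)}{1+K\rho_2(t)})p\,u_1(t,x) - d\,u_2(t,x)$, with $\rho_i(t)=\int_\Omega u_i(t,x)\,dx$, with strictly positive initial data in $L^1(\Omega)$. If $u_1(t,x)\le M_1 u_2(t,x)$ pointwise for some constant $M_1>0$, then $\rho_1(t) \le \max\{\rho_1(0), (2\bar a - 1)M_1/K\}$ for all $t\ge 0$, where $\bar a = \max_{x\in\overline\Omega} a(x)$. -/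
open Set MeasureTheory

lemma barrier_lemma (f : ℝ → ℝ) (C : ℝ)
    (hcont : ∀ t ≥ (0:ℝ), ContinuousAt f t)
    (hder : ∀ t ≥ (0:ℝ), C < f t → ∃ y, y ≤ 0 ∧ HasDerivAt f y t) :
    ∀ t ≥ (0:ℝ), f t ≤ max (f 0) C := by
  intro t0 ht0
  by_contra h
  push_neg at h
  set B := max (f 0) C with hB
  have hf0 : f 0 ≤ B := le_max_left _ _
  have hCB : C ≤ B := le_max_right _ _
  set S := {s : ℝ | s ∈ Icc 0 t0 ∧ f s ≤ B} with hS
  have h0S : (0:ℝ) ∈ S := ⟨⟨le_refl 0, ht0⟩, hf0⟩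
  have hfc : ContinuousOn f (Icc 0 t0) := fun x hx =>
    (hcont x hx.1).continuousWithinAt
  have hScl : IsClosed S := by
    have : S = Icc 0 t0 ∩ f ⁻¹' (Iic B) := by
      ext x; simp [hS, Set.mem_setOf_eq, and_comm]

    rw [this]
    exact hfc.preimage_isClosed_of_isClosed isClosed_Icc isClosed_Iic
  have hScpt : IsCompact S := by
    apply Metric.isCompact_of_isClosed_isBounded hScl
    exact (Metric.isBounded_Icc 0 t0).subset (fun x hx => hx.1)
  set s := sSup S with hs
  have hsS : s ∈ S := hScpt.sSup_mem ⟨0, h0S⟩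
  have hst0 : s < t0 := by
    rcases lt_or_eq_of_le hsS.1.2 with h' | h'
    · exact h'
    · exfalso; have := hsS.2; rw [h'] at this; linarith
  have hgt : ∀ x, s < x → x ≤ t0 → B < f x := by
    intro x hx1 hx2
    by_contra hxB
    push_neg at hxB
    have : x ∈ S := ⟨⟨le_trans hsS.1.1 hx1.le, hx2⟩, hxB⟩
    exact absurd (le_csSup hScpt.isBounded.bddAbove this) (not_le.mpr hx1)
  have hanti : AntitoneOn f (Icc s t0) := by
    apply antitoneOn_of_deriv_nonpos (convex_Icc s t0)
    · exact hfc.mono (fun x hx => ⟨le_trans hsS.1.1 hx.1, hx.2⟩)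
    · intro x hx
      rw [interior_Icc] at hx
      have hx0 : 0 ≤ x := le_trans hsS.1.1 hx.1.le
      obtain ⟨y, hy, hyd⟩ := hder x hx0 (lt_of_le_of_lt hCB (hgt x hx.1 hx.2.le))
      exact hyd.differentiableAt.differentiableWithinAt
    · intro x hx
      rw [interior_Icc] at hx
      have hx0 : 0 ≤ x := le_trans hsS.1.1 hx.1.le
      obtain ⟨y, hy, hyd⟩ := hder x hx0 (lt_of_le_of_lt hCB (hgt x hx.1 hx.2.le))
      rw [hyd.deriv]; exact hy
  have : f t0 ≤ f s := hanti ⟨le_refl s, hst0.le⟩ ⟨hst0.le, le_refl t0⟩ hst0.le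
  linarith [hsS.2]

theorem rho1_bounded
    (Ω : Set ℝ) (hΩopen : IsOpen Ω) (hΩbdd : Bornology.IsBounded Ω)
    (p d K : ℝ) (hp : 0 < p) (hd : 0 < d) (hK : 0 < K)
    (a : ℝ → ℝ) (ha_cont : ContinuousOn a (closure Ω))
    (ha_range : ∀ x ∈ closure Ω, 1/2 < a x ∧ a x < 1)
    (abar : ℝ) (habar_le : ∀ x ∈ closure Ω, a x ≤ abar)
    (habar_mem : ∃ x ∈ closure Ω, a x = abar)
    (u1 u2 : ℝ → ℝ → ℝ)
    (hpos1 : ∀ t ≥ (0:ℝ), ∀ x ∈ Ω, 0 ≤ u1 t x)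
    (hpos2 : ∀ t ≥ (0:ℝ), ∀ x ∈ Ω, 0 ≤ u2 t x)
    (hinit1 : IntegrableOn (u1 0) Ω ∧ ∀ x ∈ Ω, 0 < u1 0 x)
    (hinit2 : IntegrableOn (u2 0) Ω ∧ ∀ x ∈ Ω, 0 < u2 0 x)
    (ρ1 ρ2 : ℝ → ℝ)
    (hρ1 : ∀ t, ρ1 t = ∫ x in Ω, u1 t x)
    (hρ2 : ∀ t, ρ2 t = ∫ x in Ω, u2 t x)
    (hint1 : ∀ t ≥ (0:ℝ), IntegrableOn (u1 t) Ω)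
    (hint2 : ∀ t ≥ (0:ℝ), IntegrableOn (u2 t) Ω)
    (heq1 : ∀ t ≥ (0:ℝ), ∀ x ∈ Ω,
      HasDerivAt (fun s => u1 s x) ((2 * a x / (1 + K * ρ2 t) - 1) * p * u1 t x) t)
    (heq2 : ∀ t ≥ (0:ℝ), ∀ x ∈ Ω,
      HasDerivAt (fun s => u2 s x)
        (2 * (1 - a x / (1 + K * ρ2 t)) * p * u1 t x - d * u2 t x) t)
    (hmassderiv : ∀ t ≥ (0:ℝ),
      HasDerivAt ρ1 (∫ x in Ω, (2 * a x / (1 + K * ρ2 t) - 1) * p * u1 t x) t)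
    (M1 : ℝ) (hM1 : 0 < M1)
    (hcomp : ∀ t ≥ (0:ℝ), ∀ x ∈ Ω, u1 t x ≤ M1 * u2 t x) :
    ∀ t ≥ (0:ℝ), ρ1 t ≤ max (ρ1 0) ((2 * abar - 1) * M1 / K) := by
  apply barrier_lemma
  · intro t ht; exact (hmassderiv t ht).continuousAt
  · intro t ht hCf
    refine ⟨_, ?_, hmassderiv t ht⟩
    obtain ⟨x0, hx0, hx0a⟩ := habar_mem
    have habar_pos : 1/2 < abar := hx0a ▸ (ha_range x0 hx0).1
    have hρ2nonneg : 0 ≤ ρ2 t := by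
      rw [hρ2]
      exact setIntegral_nonneg hΩopen.measurableSet (hpos2 t ht)
    have hρ1ρ2 : ρ1 t ≤ M1 * ρ2 t := by
      rw [hρ1, hρ2, ← integral_const_mul]
      exact setIntegral_mono_on (hint1 t ht) ((hint2 t ht).const_mul M1)
        hΩopen.measurableSet (hcomp t ht)
    have h1K : 2 * abar < 1 + K * ρ2 t := by
      have h1 : (2 * abar - 1) * M1 < K * ρ1 t := by
        rw [div_lt_iff₀ hK] at hCf; linarith
      nlinarith
    have hden : 0 < 1 + K * ρ2 t := by nlinarith
    have hnp : ∀ x ∈ Ω, (2 * a x / (1 + K * ρ2 t) - 1) * p * u1 t x ≤ 0 := by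
      intro x hx
      have hax := habar_le x (subset_closure hx)
      have h2 : 2 * a x / (1 + K * ρ2 t) ≤ 1 := by
        rw [div_le_one hden]; nlinarith
      have hu := hpos1 t ht x hx
      have h3 : (2 * a x / (1 + K * ρ2 t) - 1) * p ≤ 0 :=
        mul_nonpos_of_nonpos_of_nonneg (by linarith) hp.le
      exact mul_nonpos_of_nonpos_of_nonneg h3 hu
    exact setIntegral_nonpos hΩopen.measurableSet hnp
end

section
/- Let $p,K>0$, $M_3>0$, and let $\rho_2:[0,\infty)\to[0,M_3]$ be continuous. Fix $x_1,x_2$ with $a(x_1)<a(x_2)$, where $a(x_1),a(x_2)\in(1/2,1)$. Let $v,w:[0,\infty)\to(0,\infty)$ be $C^1$ with $v'(t) = (\tfrac{2a(x_1)}{1+K\rho_2(t)}-1)p\,v(t)$ and $w'(t) = (\tfrac{2a(x_2)}{1+K\rho_2(t)}-1)p\,w(t)$. Then $v(t)/w(t) \le (v(0)/w(0))\exp\big(p\tfrac{2(a(x_1)-a(x_2))}{1+KM_3}t\big)$ for all $t\ge 0$, and in particular $v(t)/w(t)\to 0$ exponentially as $t\to\infty$. -/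
/-!
The ratio `r = v / w` satisfies `r' = p * (2 * (a1 - a2) / (1 + K * ρ2)) * r`. Since `a1 < a2` and
`0 ≤ ρ2 ≤ M3`, this rate is at most the negative constant `p * (2 * (a1 - a2) / (1 + K * M3))`,
so Grönwall's inequality bounds `r` by `r 0` times the corresponding exponential.
-/

open Filter Real Set

theorem le_mul_exp_of_hasDerivAt_le_mul {r r' : ℝ → ℝ} {c : ℝ}
    (hr : ∀ t ≥ (0:ℝ), HasDerivAt r (r' t) t) (hbound : ∀ t ≥ (0:ℝ), r' t ≤ c * r t) :
    ∀ t ≥ (0:ℝ), r t ≤ r 0 * exp (c * t) := by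
  intro t ht
  have hcont : ContinuousOn r (Icc 0 t) := fun s hs => (hr s hs.1).continuousAt.continuousWithinAt
  have hslope : ∀ s ∈ Ico 0 t, ∀ q, r' s < q → ∃ᶠ z in nhdsWithin s (Ioi s), slope r s z < q :=
    fun s hs _ hq => (hr s hs.1).hasDerivWithinAt.liminf_right_slope_le hq
  have := le_gronwallBound_of_liminf_deriv_right_le (K := c) (ε := 0) hcont hslope le_rfl
    (fun s hs => (add_zero (c * r s)).symm ▸ hbound s hs.1) t ⟨ht, le_rfl⟩
  rwa [gronwallBound_ε0, sub_zero] at this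

theorem hasDerivAt_div_of_hasDerivAt_mul_self {v w : ℝ → ℝ} {α β t : ℝ}
    (hv : HasDerivAt v (α * v t) t) (hw : HasDerivAt w (β * w t) t) (hwt : w t ≠ 0) :
    HasDerivAt (fun s => v s / w s) ((α - β) * (v t / w t)) t :=
  (hv.div hw hwt).congr_deriv (by field_simp)

theorem growth_rate_sub_le {p K M a₁ a₂ ρ : ℝ} (hp : 0 ≤ p) (hK : 0 ≤ K) (ha : a₁ ≤ a₂)
    (hρ : ρ ∈ Icc 0 M) :
    (2 * a₁ / (1 + K * ρ) - 1) * p - (2 * a₂ / (1 + K * ρ) - 1) * p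
      ≤ p * (2 * (a₁ - a₂) / (1 + K * M)) := by
  have hden : 0 < 1 + K * ρ := by nlinarith [hρ.1]
  have hdenM : 1 + K * ρ ≤ 1 + K * M := by nlinarith [hρ.2]
  calc (2 * a₁ / (1 + K * ρ) - 1) * p - (2 * a₂ / (1 + K * ρ) - 1) * p
      = p * (2 * (a₁ - a₂) / (1 + K * ρ)) := by ring
    _ ≤ p * (2 * (a₁ - a₂) / (1 + K * M)) := by
      refine mul_le_mul_of_nonneg_left ?_ hp
      rw [div_le_div_iff₀ hden (by linarith)]
      nlinarith

theorem tendsto_zero_of_nonneg_of_le_mul_exp {f : ℝ → ℝ} {C c : ℝ} (hc : c < 0)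
    (hf_nonneg : ∀ t ≥ (0:ℝ), 0 ≤ f t) (hf_le : ∀ t ≥ (0:ℝ), f t ≤ C * exp (c * t)) :
    Tendsto f atTop (nhds 0) := by
  have hexp : Tendsto (fun t => C * exp (c * t)) atTop (nhds 0) := by
    simpa using (tendsto_exp_atBot.comp (tendsto_id.const_mul_atTop_of_neg hc)).const_mul C
  exact squeeze_zero' (eventually_ge_atTop 0 |>.mono hf_nonneg)
    (eventually_ge_atTop 0 |>.mono hf_le) hexp

theorem quotient_exponential_decay_general
    (p K M3 a1 a2 : ℝ) (hp : 0 < p) (hK : 0 < K)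
    (hlt : a1 < a2)
    (ρ2 : ℝ → ℝ)
    (hρ2_range : ∀ t ≥ (0:ℝ), ρ2 t ∈ Set.Icc (0:ℝ) M3)
    (v w : ℝ → ℝ)
    (hv_pos : ∀ t ≥ (0:ℝ), 0 < v t) (hw_pos : ∀ t ≥ (0:ℝ), 0 < w t)
    (hv : ∀ t ≥ (0:ℝ), HasDerivAt v ((2 * a1 / (1 + K * ρ2 t) - 1) * p * v t) t)
    (hw : ∀ t ≥ (0:ℝ), HasDerivAt w ((2 * a2 / (1 + K * ρ2 t) - 1) * p * w t) t) :
    (∀ t ≥ (0:ℝ), v t / w t ≤ (v 0 / w 0) * Real.exp (p * (2 * (a1 - a2) / (1 + K * M3)) * t)) ∧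
    Tendsto (fun t => v t / w t) atTop (nhds 0) := by
  have hratio_pos : ∀ t ≥ (0:ℝ), 0 < v t / w t := fun t ht => div_pos (hv_pos t ht) (hw_pos t ht)
  have hbound := le_mul_exp_of_hasDerivAt_le_mul
    (fun t ht => hasDerivAt_div_of_hasDerivAt_mul_self (hv t ht) (hw t ht) (hw_pos t ht).ne')
    (fun t ht => mul_le_mul_of_nonneg_right
      (growth_rate_sub_le hp.le hK.le hlt.le (hρ2_range t ht)) (hratio_pos t ht).le)
  refine ⟨hbound, tendsto_zero_of_nonneg_of_le_mul_exp ?_ (fun t ht => (hratio_pos t ht).le) hbound⟩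
  have hM3_nonneg : 0 ≤ M3 := (hρ2_range 0 le_rfl).1.trans (hρ2_range 0 le_rfl).2
  exact mul_neg_of_pos_of_neg hp (div_neg_of_neg_of_pos (by linarith) (by positivity))

theorem quotient_exponential_decay
    (p K M3 a1 a2 : ℝ) (hp : 0 < p) (hK : 0 < K) (hM3 : 0 < M3)
    (ha1 : a1 ∈ Set.Ioo (1/2 : ℝ) 1) (ha2 : a2 ∈ Set.Ioo (1/2 : ℝ) 1)
    (hlt : a1 < a2)
    (ρ2 : ℝ → ℝ) (hρ2_cont : Continuous ρ2)
    (hρ2_range : ∀ t ≥ (0:ℝ), ρ2 t ∈ Set.Icc (0:ℝ) M3)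
    (v w : ℝ → ℝ)
    (hv_pos : ∀ t ≥ (0:ℝ), 0 < v t) (hw_pos : ∀ t ≥ (0:ℝ), 0 < w t)
    (hv : ∀ t ≥ (0:ℝ), HasDerivAt v ((2 * a1 / (1 + K * ρ2 t) - 1) * p * v t) t)
    (hw : ∀ t ≥ (0:ℝ), HasDerivAt w ((2 * a2 / (1 + K * ρ2 t) - 1) * p * w t) t) :
    (∀ t ≥ (0:ℝ), v t / w t ≤ (v 0 / w 0) * Real.exp (p * (2 * (a1 - a2) / (1 + K * M3)) * t)) ∧
    Tendsto (fun t => v t / w t) atTop (nhds 0) :=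
  quotient_exponential_decay_general p K M3 a1 a2 hp hK hlt ρ2 hρ2_range v w hv_pos hw_pos hv hw
end

section
/- Let $F:(\mathbb{R}^+)^2\to\mathbb{R}^2$ be locally Lipschitz with a globally asymptotically stable equilibrium $\bar u$, and let $V\in C^1((\mathbb{R}^+)^2)$ be a strict Lyapunov function for $u' = F(u)$ with compact level sets, with $\nabla V(u)\cdot F(u) < 0$ for $u\neq\bar u$ and minimum value $\delta = V(\bar u)$. Suppose moreover that for every $a>\delta$ there is $\tilde\beta_a>0$ such that $\nabla V(u)\cdot F(u) \le -\tilde\beta_a(V(u)-a)$ whenever $V(u)\ge a$. If $\tilde u:[0,\infty)\to(\mathbb{R}^+)^2$ solves the perturbed equation $\tilde u' = F(\tilde u) + f$ with $f\in L^1(0,\infty)\cap C([0,\infty))$ and $\tilde u$ bounded, then $\tilde u(t)\to\bar u$ as $t\to\infty$. -/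
open Filter MeasureTheory Set Topology

/-!
Let `M` and `C` bound `‖∇V‖` and `‖F‖` along the bounded trajectory. The derivative of
`V ∘ ũ` is at most `⟪∇V ũ, F ũ⟫ + M ‖f‖ ≤ M ‖f‖`, so `V ∘ ũ` minus the convergent integral of
`M ‖f‖` is nonincreasing and bounded: `V ∘ ũ` converges. Since `‖ũ'‖ ≤ C + ‖f‖` with
`f ∈ L¹`, every late visit of `ũ` near a cluster point `x` is followed by a stay of fixed
length nearby. If `x ≠ ū` then `⟪∇V x, F x⟫ < 0`, so each such stay lowers `V ∘ ũ` by a fixed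
amount, contradicting convergence. Hence `ū` is the only cluster point of `ũ`.
-/

theorem MeasureTheory.IntegrableOn.intervalIntegrable_of_Ioi {k : ℝ → ℝ} {a s t : ℝ}
    (hk : IntegrableOn k (Ioi a)) (hs : a ≤ s) (ht : a ≤ t) : IntervalIntegrable k volume s t :=
  intervalIntegrable_iff.2 <| hk.mono_set fun _ hx => lt_of_le_of_lt (le_min hs ht) hx.1

theorem MeasureTheory.IntegrableOn.eventually_intervalIntegral_lt {k : ℝ → ℝ} {a ε : ℝ}
    (hk : IntegrableOn k (Ioi a)) (hε : 0 < ε) :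
    ∀ᶠ t in atTop, ∀ s ≥ t, ∫ x in t..s, k x < ε := by
  obtain ⟨T, hT⟩ := eventually_atTop.1 <|
    (intervalIntegral_tendsto_integral_Ioi a hk tendsto_id).eventually
      (Metric.ball_mem_nhds _ (half_pos hε))
  refine eventually_atTop.2 ⟨max a T, fun t ht s hst => ?_⟩
  have hat : a ≤ t := le_of_max_le_left ht
  have hTt : T ≤ t := le_of_max_le_right ht
  rw [← intervalIntegral.integral_interval_sub_left
    (hk.intervalIntegrable_of_Ioi le_rfl (hat.trans hst)) (hk.intervalIntegrable_of_Ioi le_rfl hat)]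
  have h₁ := hT s (hTt.trans hst)
  have h₂ := hT t hTt
  rw [id, Real.dist_eq] at h₁ h₂
  linarith [(abs_lt.1 h₁).2, (abs_lt.1 h₂).1]

theorem AntitoneOn.exists_tendsto_atTop {f : ℝ → ℝ} {a : ℝ} (hf : AntitoneOn f (Ici a))
    (hbdd : BddBelow (f '' Ici a)) : ∃ L, Tendsto f atTop (𝓝 L) := by
  have hanti : Antitone fun t => f (max t a) := fun s t hst =>
    hf (le_max_right s a) (le_max_right t a) (max_le_max hst le_rfl)
  have hbdd' : BddBelow (range fun t => f (max t a)) :=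
    hbdd.mono (range_subset_iff.2 fun t => mem_image_of_mem f (le_max_right t a))
  refine ⟨_, (tendsto_atTop_ciInf hanti hbdd').congr' ?_⟩
  filter_upwards [eventually_ge_atTop a] with t ht
  rw [max_eq_left ht]

theorem sub_le_integral_of_hasDerivAt_le {g g' φ : ℝ → ℝ} {s t : ℝ} (hst : s ≤ t)
    (hg : ∀ x ∈ Icc s t, HasDerivAt g (g' x) x) (hφ : IntervalIntegrable φ volume s t)
    (hle : ∀ x ∈ Ioo s t, g' x ≤ φ x) : g t - g s ≤ ∫ x in s..t, φ x :=
  intervalIntegral.sub_le_integral_of_hasDeriv_right_of_le hst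
    (fun x hx => (hg x hx).continuousAt.continuousWithinAt)
    (fun x hx => (hg x (Ioo_subset_Icc_self hx)).hasDerivWithinAt)
    ((integrableOn_Icc_iff_integrableOn_Ioc).2 (hφ.1)) hle

theorem exists_tendsto_of_hasDerivAt_le {g g' k : ℝ → ℝ} {a : ℝ}
    (hg : ∀ t ≥ a, HasDerivAt g (g' t) t) (hle : ∀ t ≥ a, g' t ≤ k t)
    (hk : IntegrableOn k (Ioi a)) (hk_nonneg : ∀ t, 0 ≤ k t) (hbdd : BddBelow (g '' Ici a)) :
    ∃ L, Tendsto g atTop (𝓝 L) := by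
  set K : ℝ → ℝ := fun t => ∫ x in a..t, k x
  have hK_le : ∀ t ≥ a, K t ≤ ∫ x in Ioi a, k x := fun t ht => by
    simp only [K, intervalIntegral.integral_of_le ht]
    exact setIntegral_mono_set hk (ae_of_all _ hk_nonneg)
      Ioc_subset_Ioi_self.eventuallyLE
  have hanti : AntitoneOn (fun t => g t - K t) (Ici a) := by
    intro s (hs : a ≤ s) t (ht : a ≤ t) hst
    have hg_sub := sub_le_integral_of_hasDerivAt_le hst (fun x hx => hg x (hs.trans hx.1))
      (hk.intervalIntegrable_of_Ioi hs ht) (fun x hx => hle x (hs.trans hx.1.le))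
    have hK_sub : K t - K s = ∫ x in s..t, k x :=
      intervalIntegral.integral_interval_sub_left (hk.intervalIntegrable_of_Ioi le_rfl ht)
        (hk.intervalIntegrable_of_Ioi le_rfl hs)
    linarith
  obtain ⟨m, hm⟩ := hbdd
  obtain ⟨L, hL⟩ := hanti.exists_tendsto_atTop ⟨m - ∫ x in Ioi a, k x, by
    rintro _ ⟨t, ht, rfl⟩
    linarith [hm (mem_image_of_mem g ht), hK_le t ht]⟩
  exact ⟨_, (hL.add (intervalIntegral_tendsto_integral_Ioi a hk tendsto_id)).congr
    fun t => sub_add_cancel _ _⟩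

theorem continuous_of_hasGradientAt {E : Type*} [NormedAddCommGroup E] [InnerProductSpace ℝ E]
    [CompleteSpace E] {V : E → ℝ} {gradV : E → E} (hV : ContDiff ℝ 1 V)
    (hgrad : ∀ u, HasGradientAt V (gradV u) u) : Continuous gradV := by
  have : gradV = fun u => (InnerProductSpace.toDual ℝ E).symm (fderiv ℝ V u) := by
    ext1 u
    rw [(hgrad u).hasFDerivAt.fderiv, LinearIsometryEquiv.symm_apply_apply]
  rw [this]
  exact (InnerProductSpace.toDual ℝ E).symm.continuous.comp (hV.continuous_fderiv one_ne_zero)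

theorem HasGradientAt.comp_hasDerivAt {E : Type*} [NormedAddCommGroup E] [InnerProductSpace ℝ E]
    [CompleteSpace E] {V : E → ℝ} {g : E} {u : ℝ → E} {u' : E} {t : ℝ}
    (hV : HasGradientAt V g (u t)) (hu : HasDerivAt u u' t) :
    HasDerivAt (V ∘ u) (inner ℝ g u') t := by
  simpa using hV.hasFDerivAt.comp_hasDerivAt t hu

theorem exists_norm_comp_le_of_norm_le {E F : Type*} [NormedAddCommGroup E] [ProperSpace E]
    [SeminormedAddCommGroup F] {G : E → F} (hG : Continuous G) {u : ℝ → E} {s : Set ℝ} {R : ℝ}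
    (hu : ∀ t ∈ s, ‖u t‖ ≤ R) : ∃ M, ∀ t ∈ s, ‖G (u t)‖ ≤ M := by
  obtain ⟨M, hM⟩ := (isCompact_closedBall (0 : E) R).exists_bound_of_continuousOn hG.continuousOn
  exact ⟨M, fun t ht => hM _ (mem_closedBall_zero_iff.2 (hu t ht))⟩

def UniformlyContinuousAtTop {E : Type*} [PseudoMetricSpace E] (u : ℝ → E) : Prop :=
  ∀ ε > 0, ∃ τ > 0, ∀ᶠ t in atTop, ∀ s ∈ Icc t (t + τ), dist (u s) (u t) < ε

theorem uniformlyContinuousAtTop_of_norm_deriv_le {E : Type*} [NormedAddCommGroup E]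
    [NormedSpace ℝ E] {u u' : ℝ → E} {k : ℝ → ℝ} {a C : ℝ}
    (hu : ∀ t ≥ a, HasDerivAt u (u' t) t) (hbound : ∀ t ≥ a, ‖u' t‖ ≤ C + k t)
    (hk : IntegrableOn k (Ioi a)) : UniformlyContinuousAtTop u := by
  intro ε hε
  obtain ⟨τ, hτ, hCτ⟩ := exists_pos_mul_lt (half_pos hε) |C|
  refine ⟨τ, hτ, ?_⟩
  filter_upwards [eventually_ge_atTop a, hk.eventually_intervalIntegral_lt (half_pos hε)]
    with t hat htail s ⟨hts, hsτ⟩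
  have hint : IntervalIntegrable k volume t s := hk.intervalIntegrable_of_Ioi hat (hat.trans hts)
  have hdisp : ‖u s - u t‖ ≤ ∫ x in t..s, (C + k x) :=
    norm_sub_le_integral_of_norm_deriv_le_of_le hts
      (fun x hx => (hu x (hat.trans hx.1)).continuousAt.continuousWithinAt)
      (fun x hx => (hu x (hat.trans hx.1.le)).differentiableAt.differentiableWithinAt)
      (ae_of_all _ fun x hx => (hu x (hat.trans hx.1.le)).deriv ▸ hbound x (hat.trans hx.1.le))
      (intervalIntegrable_const.add hint)
  rw [intervalIntegral.integral_add intervalIntegrable_const hint,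
    intervalIntegral.integral_const, smul_eq_mul] at hdisp
  have hC : (s - t) * C ≤ |C| * τ := by
    nlinarith [le_abs_self C, abs_nonneg C]
  rw [dist_eq_norm]
  linarith [htail s hts]

theorem MapClusterPt.nonneg_of_hasDerivAt_le {E : Type*} [PseudoMetricSpace E] {u : ℝ → E}
    {W : E → ℝ} {g g' k : ℝ → ℝ} {a L : ℝ} {x : E} (hx : MapClusterPt x atTop u)
    (hW : ContinuousAt W x) (hu : UniformlyContinuousAtTop u) (hg : Tendsto g atTop (𝓝 L))
    (hderiv : ∀ t ≥ a, HasDerivAt g (g' t) t) (hle : ∀ t ≥ a, g' t ≤ W (u t) + k t)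
    (hk : IntegrableOn k (Ioi a)) : 0 ≤ W x := by
  by_contra! hWx
  set η := -W x / 2 with hη
  have hη_pos : 0 < η := by linarith
  obtain ⟨r, hr, hWr⟩ : ∃ r > 0, ∀ y, dist y x < r → W y < -η :=
    Metric.eventually_nhds_iff.1 (hW.eventually (gt_mem_nhds (by linarith)))
  obtain ⟨τ, hτ, hdrift⟩ := hu (r / 2) (half_pos hr)
  have hgap : Tendsto (fun t => g (t + τ) - g t) atTop (𝓝 0) := by
    simpa using (hg.comp (tendsto_atTop_add_const_right _ τ tendsto_id)).sub hg
  obtain ⟨t, hclose, hat, hdrift_t, hgap_t, htail⟩ :=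
    ((hx.frequently (Metric.ball_mem_nhds x (half_pos hr))).and_eventually
      ((eventually_ge_atTop a).and (hdrift.and ((hgap.eventually
        (Ioi_mem_nhds (neg_lt_zero.2 (half_pos (mul_pos hη_pos hτ))))).and
        (hk.eventually_intervalIntegral_lt (half_pos (mul_pos hη_pos hτ))))))).exists
  have hint : IntervalIntegrable k volume t (t + τ) :=
    hk.intervalIntegrable_of_Ioi hat (by linarith)
  have hdecay : g (t + τ) - g t ≤ ∫ s in t..t + τ, (-η + k s) := by
    refine sub_le_integral_of_hasDerivAt_le (by linarith) (fun s hs => hderiv s (hat.trans hs.1))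
      (intervalIntegrable_const.add hint) fun s hs => ?_
    have hs_close : dist (u s) x < r := calc
      dist (u s) x ≤ dist (u s) (u t) + dist (u t) x := dist_triangle _ _ _
      _ < r / 2 + r / 2 := add_lt_add (hdrift_t s (Ioo_subset_Icc_self hs)) hclose
      _ = r := add_halves r
    linarith [hle s (hat.trans hs.1.le), hWr _ hs_close]
  rw [intervalIntegral.integral_add intervalIntegrable_const hint,
    intervalIntegral.integral_const, smul_eq_mul, add_sub_cancel_left] at hdecay
  linarith [htail (t + τ) (by linarith)]

theorem tendsto_nhds_of_strictLyapunov_of_integrable {E : Type*} [NormedAddCommGroup E]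
    [InnerProductSpace ℝ E] [ProperSpace E] {F : E → E} {V : E → ℝ} {gradV : E → E}
    {K : Set E} {ubar : E} {f u : ℝ → E} {R : ℝ} (hF : Continuous F) (hV : ContDiff ℝ 1 V)
    (hgrad : ∀ v, HasGradientAt V (gradV v) v) (hK : IsClosed K) (hequi : F ubar = 0)
    (hstrict : ∀ v ∈ K, v ≠ ubar → inner ℝ (gradV v) (F v) < 0) (hf : IntegrableOn f (Ioi 0))
    (hu_mem : ∀ t ≥ (0:ℝ), u t ∈ K) (hu : ∀ t ≥ (0:ℝ), HasDerivAt u (F (u t) + f t) t)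
    (hu_bdd : ∀ t ≥ (0:ℝ), ‖u t‖ ≤ R) : Tendsto u atTop (𝓝 ubar) := by
  set W := fun v => inner ℝ (gradV v) (F v)
  have hgradV : Continuous gradV := continuous_of_hasGradientAt hV hgrad
  have hW_nonpos : ∀ t ≥ (0:ℝ), W (u t) ≤ 0 := fun t ht => by
    rcases eq_or_ne (u t) ubar with h | h
    · simp [W, h, hequi]
    · exact (hstrict _ (hu_mem t ht) h).le
  obtain ⟨M, hM⟩ := exists_norm_comp_le_of_norm_le (s := Ici 0) hgradV hu_bdd
  obtain ⟨C, hC⟩ := exists_norm_comp_le_of_norm_le (s := Ici 0) hF hu_bdd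
  obtain ⟨m, hm⟩ := exists_norm_comp_le_of_norm_le (s := Ici 0) hV.continuous hu_bdd
  have hderiv : ∀ t ≥ (0:ℝ), HasDerivAt (V ∘ u) (inner ℝ (gradV (u t)) (F (u t) + f t)) t :=
    fun t ht => (hgrad _).comp_hasDerivAt (hu t ht)
  have hle : ∀ t ≥ (0:ℝ),
      inner ℝ (gradV (u t)) (F (u t) + f t) ≤ W (u t) + M * ‖f t‖ := fun t ht => by
    rw [inner_add_right]
    gcongr
    exact (real_inner_le_norm _ _).trans (mul_le_mul_of_nonneg_right (hM t ht) (norm_nonneg _))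
  have hk : IntegrableOn (fun t => M * ‖f t‖) (Ioi 0) := hf.norm.const_mul M
  obtain ⟨L, hL⟩ := exists_tendsto_of_hasDerivAt_le hderiv
    (fun t ht => (hle t ht).trans (by linarith [hW_nonpos t ht])) hk
    (fun t => mul_nonneg ((norm_nonneg _).trans (hM 0 self_mem_Ici)) (norm_nonneg _))
    ⟨-m, by rintro _ ⟨t, ht, rfl⟩; exact neg_le_of_abs_le (hm t ht)⟩
  have hunif : UniformlyContinuousAtTop u := uniformlyContinuousAtTop_of_norm_deriv_le (C := C) hu
    (fun t ht => (norm_add_le _ _).trans (by linarith [hC t ht])) hf.norm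
  refine (isCompact_closedBall 0 R).tendsto_nhds_of_unique_mapClusterPt
    (eventually_atTop.2 ⟨0, fun t ht => mem_closedBall_zero_iff.2 (hu_bdd t ht)⟩)
    fun x _ hx => by_contra fun hne => ?_
  have hxK : x ∈ K := hK.mem_of_mapClusterPt hx (eventually_atTop.2 ⟨0, hu_mem⟩)
  exact (hstrict x hxK hne).not_ge
    (hx.nonneg_of_hasDerivAt_le (hgradV.inner hF).continuousAt hunif hL hderiv hle hk)

theorem perturbed_lyapunov_convergence_general
    (F : EuclideanSpace ℝ (Fin 2) → EuclideanSpace ℝ (Fin 2))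
    (hF : LocallyLipschitz F)
    (ubar : EuclideanSpace ℝ (Fin 2))
    (hequi : F ubar = 0)
    (V : EuclideanSpace ℝ (Fin 2) → ℝ) (hV : ContDiff ℝ 1 V)
    (gradV : EuclideanSpace ℝ (Fin 2) → EuclideanSpace ℝ (Fin 2))
    (hgrad : ∀ u, HasGradientAt V (gradV u) u)
    (hstrict : ∀ u, (∀ i, 0 ≤ u i) → u ≠ ubar →
      inner (𝕜 := ℝ) (gradV u) (F u) < 0)
    (f : ℝ → EuclideanSpace ℝ (Fin 2))
    (hf_int : IntegrableOn f (Set.Ioi (0:ℝ)))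
    (utilde : ℝ → EuclideanSpace ℝ (Fin 2))
    (hu_pos : ∀ t ≥ (0:ℝ), ∀ i, 0 ≤ utilde t i)
    (hu_sol : ∀ t ≥ (0:ℝ), HasDerivAt utilde (F (utilde t) + f t) t)
    (R : ℝ) (hu_bdd : ∀ t ≥ (0:ℝ), ‖utilde t‖ ≤ R) :
    Tendsto utilde atTop (nhds ubar) := by
  have horthant : IsClosed {v : EuclideanSpace ℝ (Fin 2) | ∀ i, 0 ≤ v i} := by
    simp only [ofPred_forall]
    exact isClosed_iInter fun i => isClosed_le continuous_const (PiLp.continuous_apply 2 _ i)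
  exact tendsto_nhds_of_strictLyapunov_of_integrable hF.continuous hV hgrad horthant hequi hstrict
    hf_int hu_pos hu_sol hu_bdd

theorem perturbed_lyapunov_convergence
    (F : EuclideanSpace ℝ (Fin 2) → EuclideanSpace ℝ (Fin 2))
    (hF : LocallyLipschitz F)
    (ubar : EuclideanSpace ℝ (Fin 2)) (hubar_pos : ∀ i, 0 ≤ ubar i)
    (hequi : F ubar = 0)
    (hGAS : ∀ u : ℝ → EuclideanSpace ℝ (Fin 2),
      (∀ i, 0 ≤ u 0 i) → (∀ t ≥ (0:ℝ), ∀ i, 0 ≤ u t i) →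
      (∀ t ≥ (0:ℝ), HasDerivAt u (F (u t)) t) →
      Tendsto u atTop (nhds ubar))
    (V : EuclideanSpace ℝ (Fin 2) → ℝ) (hV : ContDiff ℝ 1 V)
    (gradV : EuclideanSpace ℝ (Fin 2) → EuclideanSpace ℝ (Fin 2))
    (hgrad : ∀ u, HasGradientAt V (gradV u) u)
    (δ : ℝ) (hδ : V ubar = δ)
    (hmin : ∀ u, (∀ i, 0 ≤ u i) → δ ≤ V u)
    (hstrict : ∀ u, (∀ i, 0 ≤ u i) → u ≠ ubar →
      inner (𝕜 := ℝ) (gradV u) (F u) < 0)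
    (hcompact : ∀ c : ℝ, IsCompact {u : EuclideanSpace ℝ (Fin 2) |
      (∀ i, 0 ≤ u i) ∧ V u ≤ c})
    (hβ : ∀ a > δ, ∃ β > (0:ℝ), ∀ u, (∀ i, 0 ≤ u i) → a ≤ V u →
      inner (𝕜 := ℝ) (gradV u) (F u) ≤ -β * (V u - a))
    (f : ℝ → EuclideanSpace ℝ (Fin 2))
    (hf_cont : Continuous f)
    (hf_int : IntegrableOn f (Set.Ioi (0:ℝ)))
    (utilde : ℝ → EuclideanSpace ℝ (Fin 2))
    (hu_pos : ∀ t ≥ (0:ℝ), ∀ i, 0 ≤ utilde t i)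
    (hu_sol : ∀ t ≥ (0:ℝ), HasDerivAt utilde (F (utilde t) + f t) t)
    (R : ℝ) (hu_bdd : ∀ t ≥ (0:ℝ), ‖utilde t‖ ≤ R) :
    Tendsto utilde atTop (nhds ubar) :=
  perturbed_lyapunov_convergence_general F hF ubar hequi V hV gradV hgrad hstrict f hf_int utilde
    hu_pos hu_sol R hu_bdd
end

section
/- Let $p,d,K>0$, $a\in(1/2,1)$, let $(\bar v_1,\bar v_2)$ be the positive equilibrium of the system $v_1' = (\tfrac{2a}{1+Kv_2}-1)p v_1$, $v_2' = 2(1-\tfrac{a}{1+Kv_2})p v_1 - d v_2$, and define $G(v_2) = 2(1 - \tfrac{a}{1+Kv_2})$ and $V(v_1,v_2) = \tfrac{1}{pG(\bar v_2)}(\tfrac{v_1}{\bar v_1} - 1 - \ln\tfrac{v_1}{\bar v_1}) + \tfrac{1}{d}(\tfrac{v_2}{\bar v_2} - 1 - \tfrac{1}{\bar v_2}\int_{\bar v_2}^{v_2}\tfrac{G(\bar v_2)}{G(\xi)}d\xi)$. Then along any solution $(v_1(t),v_2(t))$ with $v_1(t),v_2(t)>0$, $\tfrac{d}{dt}V(v_1(t),v_2(t))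 \le 0$. -/
/-!
Write `G` for the gain `G y = 2 (1 - a / (1 + K y))`, so the system reads `v₁' = (1 - G v₂) p v₁`,
`v₂' = G v₂ p v₁ - d v₂`, and at equilibrium `G v̄₂ = 1` and `p v̄₁ = d v̄₂`. Differentiating `V`
along a solution, the `v₁`-terms cancel and one is left with
`(G v₂ - 1) (G v₂ v̄₂ - v₂) / (v̄₂ G v₂) = -K (v₂ - v̄₂)² (K v₂ + 2 - 2a) / ((1 + K v₂)² v̄₂ G v₂)`,
which is nonpositive because `a < 1`.
-/

open intervalIntegral Set

lemma HasDerivAt.div_sub_one_sub_log_div {f : ℝ → ℝ} {f' c t : ℝ} (hf : HasDerivAt f f' t)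
    (hft : f t ≠ 0) (hc : c ≠ 0) :
    HasDerivAt (fun s => f s / c - 1 - Real.log (f s / c)) (f' / c * (1 - c / f t)) t := by
  have hfc := hf.div_const c
  refine ((hfc.sub_const 1).sub (hfc.log (div_ne_zero hft hc))).congr_deriv ?_
  rw [div_div_div_cancel_right₀ hc]
  field_simp

lemma HasDerivAt.intervalIntegral_comp {f g : ℝ → ℝ} {U : Set ℝ} {c f' t : ℝ}
    (hf : HasDerivAt f f' t) (hU : IsOpen U) (hg : ContinuousOn g U) (hsub : uIcc c (f t) ⊆ U) :
    HasDerivAt (fun s => ∫ ξ in c..f s, g ξ) (g (f t) * f') t := by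
  have hft : f t ∈ U := hsub right_mem_uIcc
  have hFTC : HasDerivAt (fun u => ∫ ξ in c..u, g ξ) (g (f t)) (f t) :=
    integral_hasDerivAt_right ((hg.mono hsub).intervalIntegrable)
      (hg.stronglyMeasurableAtFilter hU _ hft) (hg.continuousAt (hU.mem_nhds hft))
  exact hFTC.comp t hf

lemma HasDerivAt.div_sub_one_sub_integral_div {f g : ℝ → ℝ} {U : Set ℝ} {c f' t : ℝ}
    (hf : HasDerivAt f f' t) (hU : IsOpen U) (hg : ContinuousOn g U) (hsub : uIcc c (f t) ⊆ U) :
    HasDerivAt (fun s => f s / c - 1 - (1 / c) * ∫ ξ in c..f s, g ξ)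
      (f' / c * (1 - g (f t))) t := by
  refine (((hf.div_const c).sub_const 1).sub
    ((hf.intervalIntegral_comp hU hg hsub).const_mul (1 / c))).congr_deriv ?_
  ring

lemma lyapunov_derivative_eq {p d x y g x₀ y₀ : ℝ} (hp : p ≠ 0) (hd : d ≠ 0) (hx : x ≠ 0)
    (hg : g ≠ 0) (hy₀ : y₀ ≠ 0) (hrel : p * x₀ = d * y₀) :
    1 / p * ((1 - g) * p * x / x₀ * (1 - x₀ / x)) + 1 / d * ((g * p * x - d * y) / y₀ * (1 - 1 / g))
      = (g - 1) * (g * y₀ - y) / (y₀ * g) := by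
  obtain rfl : x₀ = d * y₀ / p := by rw [← hrel]; field_simp
  field_simp
  ring

section gain

variable {a K : ℝ}

lemma gain_pos {y : ℝ} (ha : a < 1) (hy : 0 ≤ K * y) : 0 < 2 * (1 - a / (1 + K * y)) := by
  have : a / (1 + K * y) < 1 := (div_lt_one (by linarith)).mpr (by linarith)
  linarith

lemma continuousOn_gain : ContinuousOn (fun y => 2 * (1 - a / (1 + K * y))) {y | 1 + K * y ≠ 0} :=
  continuousOn_const.mul (continuousOn_const.sub
    (continuousOn_const.div (by fun_prop) fun _ hy => hy))

lemma gain_sub_one_mul_nonpos {y y₀ : ℝ} (ha : a ≤ 1) (hK : 0 ≤ K) (hy : 0 ≤ K * y)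
    (hy₀ : 1 + K * y₀ = 2 * a) :
    (2 * (1 - a / (1 + K * y)) - 1) * (2 * (1 - a / (1 + K * y)) * y₀ - y) ≤ 0 := by
  have hQ : 0 < 1 + K * y := by linarith
  have hprod : (2 * (1 - a / (1 + K * y)) - 1) * (2 * (1 - a / (1 + K * y)) * y₀ - y)
      = -(K * (y - y₀) ^ 2 * (K * y + 2 - 2 * a)) / (1 + K * y) ^ 2 := by
    obtain rfl : a = (1 + K * y₀) / 2 := by linarith
    field_simp
    ring
  rw [hprod]
  apply div_nonpos_of_nonpos_of_nonneg _ (by positivity)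
  have hfac : 0 ≤ K * y + 2 - 2 * a := by linarith
  exact neg_nonpos.mpr (mul_nonneg (mul_nonneg hK (sq_nonneg _)) hfac)

end gain

theorem lyapunov_decreasing
    (p d K a : ℝ) (hp : 0 < p) (hd : 0 < d) (hK : 0 < K)
    (ha : a ∈ Set.Ioo (1/2 : ℝ) 1)
    (vbar1 vbar2 : ℝ)
    (hv2 : vbar2 = (2 * a - 1) / K)
    (hv1 : vbar1 = d * vbar2 * (1 + K * vbar2) / (2 * p * (1 + K * vbar2 - a)))
    (G : ℝ → ℝ) (hG : ∀ y, G y = 2 * (1 - a / (1 + K * y)))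
    (V : ℝ → ℝ → ℝ)
    (hV : ∀ v1 v2, V v1 v2 =
      (1 / (p * G vbar2)) * (v1 / vbar1 - 1 - Real.log (v1 / vbar1))
      + (1 / d) * (v2 / vbar2 - 1
          - (1 / vbar2) * ∫ ξ in vbar2..v2, G vbar2 / G ξ))
    (v1 v2 : ℝ → ℝ)
    (hpos1 : ∀ t ≥ (0:ℝ), 0 < v1 t) (hpos2 : ∀ t ≥ (0:ℝ), 0 < v2 t)
    (heq1 : ∀ t ≥ (0:ℝ),
      HasDerivAt v1 ((2 * a / (1 + K * v2 t) - 1) * p * v1 t) t)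
    (heq2 : ∀ t ≥ (0:ℝ),
      HasDerivAt v2 (2 * (1 - a / (1 + K * v2 t)) * p * v1 t - d * v2 t) t) :
    ∀ t ≥ (0:ℝ), ∃ D ≤ (0:ℝ), HasDerivAt (fun s => V (v1 s) (v2 s)) D t := by
  obtain ⟨ha₁, ha₂⟩ := ha
  have hvbar2 : 0 < vbar2 := hv2 ▸ div_pos (by linarith) hK
  have hbar : 1 + K * vbar2 = 2 * a := by rw [hv2]; field_simp; ring
  have hGbar : G vbar2 = 1 := by rw [hG, hbar]; field_simp; ring
  have hrel : p * vbar1 = d * vbar2 := by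
    rw [hv1, hbar]; field_simp; ring
  have hvbar1 : vbar1 ≠ 0 := by
    rintro rfl
    nlinarith [mul_pos hd hvbar2]
  have hGpos : ∀ y, 0 ≤ y → 0 < G y := fun y hy => hG y ▸ gain_pos ha₂ (by positivity)
  have hcont : ContinuousOn (fun ξ => G vbar2 / G ξ) (Ioi 0) := by
    refine continuousOn_const.div ?_ fun y hy => (hGpos y (le_of_lt hy)).ne'
    rw [show G = _ from funext hG]
    exact continuousOn_gain.mono fun y (hy : 0 < y) => by dsimp; positivity
  intro t ht
  have hd1 : HasDerivAt v1 ((1 - G (v2 t)) * p * v1 t) t := by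
    convert heq1 t ht using 1; rw [hG]; ring
  have hd2 : HasDerivAt v2 (G (v2 t) * p * v1 t - d * v2 t) t := hG (v2 t) ▸ heq2 t ht
  have hsub : uIcc vbar2 (v2 t) ⊆ Ioi 0 := ordConnected_Ioi.uIcc_subset hvbar2 (hpos2 t ht)
  simp_rw [hV]
  refine ⟨_, ?_, ((hd1.div_sub_one_sub_log_div (hpos1 t ht).ne' hvbar1).const_mul _).add
    ((hd2.div_sub_one_sub_integral_div isOpen_Ioi hcont hsub).const_mul _)⟩
  rw [hGbar, mul_one, lyapunov_derivative_eq hp.ne' hd.ne' (hpos1 t ht).ne'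
    (hGpos _ (hpos2 t ht).le).ne' hvbar2.ne' hrel, hG]
  have hKv : 0 ≤ K * v2 t := mul_nonneg hK.le (hpos2 t ht).le
  exact div_nonpos_of_nonpos_of_nonneg (gain_sub_one_mul_nonpos ha₂.le hK.le hKv hbar)
    (mul_pos hvbar2 (gain_pos ha₂ hKv)).le
end
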